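/- Every integer lattice point of the Minkowski sum c_1 Δ_{I_1} + ... + c_m Δ_{I_m} (with c_i positive integers, I_i ⊆ [n] nonempty) can be written as a sum Σ_j p_j where each p_j is an integer lattice point of c_j Δ_{I_j}. -/

import Mathlib

open Pointwise

/-- The face `Δ_I` of the standard simplex: the convex hull of the standard
basis vectors `e i` for `i ∈ I`. -/
def simplexFace {n : ℕ} (I : Finset (Fin n)) : Set (Fin n → ℝ) :=
  convexHull ℝ {x : Fin n → ℝ | ∃ i ∈ I, x = Pi.single i 1}

/-!
Write `x = ∑ j, y j` with `y j ∈ c j • Δ_{I j}`. The matrix `(y j i)` is nonnegative, vanishes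
unless `i ∈ I j`, and has integral row sums `c j` and column sums `x i`. Hall's theorem, applied
to `c j` copies of each row and `x i` copies of each column, turns it into a matrix of natural
numbers with the same margins and no larger support; its rows are the `p j`.
-/

open Finset

lemma card_filter_fst_mem_sigma_fin {ι : Type*} [Fintype ι] [DecidableEq ι] (k : ι → ℕ)
    (S : Finset ι) : #{σ : (i : ι) × Fin (k i) | σ.1 ∈ S} = ∑ i ∈ S, k i := by
  rw [show ({σ : (i : ι) × Fin (k i) | σ.1 ∈ S} : Finset _) = S.sigma fun _ => univ by
    ext; simp, card_sigma]
  simp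

lemma card_filter_fst_eq_sigma_fin {ι : Type*} [Fintype ι] [DecidableEq ι] (k : ι → ℕ) (i : ι) :
    #{σ : (i : ι) × Fin (k i) | σ.1 = i} = k i := by
  simpa using card_filter_fst_mem_sigma_fin k {i}

section Margins

variable {R α β : Type*} [Semiring R] [PartialOrder R] [IsStrictOrderedRing R]
  [Fintype α] [Fintype β]
  {y : α → β → R} {c : α → ℕ} {z : β → ℕ}

open scoped Classical in
/-- Hall's condition for matching the `c a` copies of each row `a` with the `z b` copies of each
column `b`, where a copy of `a` may only be matched with a copy of `b` if `y a b ≠ 0`. -/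
lemma card_le_card_biUnion_of_margins (hy : ∀ a b, 0 ≤ y a b)
    (hrow : ∀ a, ∑ b, y a b = c a) (hcol : ∀ b, ∑ a, y a b = z b)
    (s : Finset ((a : α) × Fin (c a))) :
    #s ≤ #(s.biUnion fun σ => {τ : (b : β) × Fin (z b) | y σ.1 τ.1 ≠ 0}) := by
  set J := s.image Sigma.fst
  set S : Finset β := {b | ∃ a ∈ J, y a b ≠ 0}
  have hrowS : ∀ a ∈ J, ∑ b ∈ S, y a b = c a := fun a ha => by
    rw [← hrow a]
    exact sum_subset (subset_univ S) fun b _ hb =>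
      by_contra fun h => hb (mem_filter.2 ⟨mem_univ b, a, ha, h⟩)
  have hmass : ∑ a ∈ J, (c a : R) ≤ ∑ b ∈ S, (z b : R) := calc
    ∑ a ∈ J, (c a : R) = ∑ a ∈ J, ∑ b ∈ S, y a b := (sum_congr rfl hrowS).symm
    _ ≤ ∑ a, ∑ b ∈ S, y a b :=
      sum_le_sum_of_subset_of_nonneg (subset_univ J) fun a _ _ => sum_nonneg fun b _ => hy a b
    _ = ∑ b ∈ S, (z b : R) := by rw [sum_comm]; simp_rw [hcol]
  calc #s ≤ #{σ : (a : α) × Fin (c a) | σ.1 ∈ J} :=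
        card_le_card fun σ hσ => mem_filter.2 ⟨mem_univ σ, mem_image_of_mem Sigma.fst hσ⟩
    _ = ∑ a ∈ J, c a := card_filter_fst_mem_sigma_fin c J
    _ ≤ ∑ b ∈ S, z b := by exact_mod_cast hmass
    _ = #{τ : (b : β) × Fin (z b) | τ.1 ∈ S} := (card_filter_fst_mem_sigma_fin z S).symm
    _ ≤ _ := card_le_card fun τ hτ => by
        simp only [S, mem_filter, mem_univ, true_and] at hτ
        obtain ⟨a, ha, h⟩ := hτ
        obtain ⟨σ, hσ, rfl⟩ := mem_image.1 ha
        exact mem_biUnion.mpr ⟨σ, hσ, by simpa using h⟩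

theorem exists_nat_matrix_of_margins (hy : ∀ a b, 0 ≤ y a b)
    (hrow : ∀ a, ∑ b, y a b = c a) (hcol : ∀ b, ∑ a, y a b = z b) :
    ∃ q : α → β → ℕ, (∀ a, ∑ b, q a b = c a) ∧ (∀ b, ∑ a, q a b = z b) ∧
      ∀ a b, y a b = 0 → q a b = 0 := by
  classical
  obtain ⟨f, hf_inj, hf_mem⟩ := (all_card_le_biUnion_card_iff_exists_injective _).mp
    (card_le_card_biUnion_of_margins hy hrow hcol)
  set q : α → β → ℕ := fun a b => #{σ | σ.1 = a ∧ (f σ).1 = b}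
  have hrowq : ∀ a, ∑ b, q a b = c a := fun a => by
    rw [← card_filter_fst_eq_sigma_fin c a, card_eq_sum_card_fiberwise (f := fun σ => (f σ).1)
      (t := univ) fun _ _ => mem_coe.2 (mem_univ _)]
    simp only [q, filter_filter]
  have hcolq_le : ∀ b, ∑ a, q a b ≤ z b := fun b => calc
    ∑ a, q a b = #{σ | (f σ).1 = b} := by
      rw [card_eq_sum_card_fiberwise (f := Sigma.fst) (t := univ)
        fun _ _ => mem_coe.2 (mem_univ _)]
      simp only [q, filter_filter, and_comm]
    _ ≤ #{τ : (b : β) × Fin (z b) | τ.1 = b} :=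
      card_le_card_of_injOn f (fun σ hσ => by simpa using hσ) hf_inj.injOn
    _ = z b := card_filter_fst_eq_sigma_fin z b
  have htotal : ∑ a, c a = ∑ b, z b := by
    have : (∑ a, c a : R) = ∑ b, z b := by
      push_cast
      simp_rw [← hrow, ← hcol]
      exact sum_comm
    exact_mod_cast this
  have hcolq : ∀ b, ∑ a, q a b = z b := fun b =>
    (sum_eq_sum_iff_of_le fun b _ => hcolq_le b).1
      (by rw [sum_comm]; simp_rw [hrowq]; exact htotal) b (mem_univ b)
  refine ⟨q, hrowq, hcolq, fun a b hab => card_eq_zero.2 (filter_eq_empty_iff.2 ?_)⟩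
  rintro σ - ⟨rfl, rfl⟩
  exact (mem_filter.1 (hf_mem σ)).2 hab

end Margins

lemma simplexFace_eq {n : ℕ} (I : Finset (Fin n)) :
    simplexFace I = {w | (∀ i, 0 ≤ w i) ∧ (∀ i ∉ I, w i = 0) ∧ ∑ i, w i = 1} := by
  refine Set.Subset.antisymm (convexHull_min ?_ ?_) ?_
  · rintro _ ⟨i, hi, rfl⟩
    refine ⟨fun j => ?_, fun j hj => ?_, by simp⟩
    · by_cases h : j = i <;> simp [h]
    · simp [show j ≠ i from fun h => hj (h ▸ hi)]
  · rintro a ⟨ha0, haI, ha1⟩ b ⟨hb0, hbI, hb1⟩ s t hs ht hst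
    refine ⟨fun i => ?_, fun i hi => by simp [haI i hi, hbI i hi], ?_⟩
    · simpa using add_nonneg (mul_nonneg hs (ha0 i)) (mul_nonneg ht (hb0 i))
    · simp [sum_add_distrib, ← mul_sum, ha1, hb1, hst]
  · rintro w ⟨hw0, hwI, hw1⟩
    have hsum : ∑ i ∈ I, w i • (Pi.single i 1 : Fin n → ℝ) = w := by
      ext j
      by_cases hj : j ∈ I <;> simp [Finset.sum_apply, Pi.single_apply, hj, hwI]
    rw [← hsum]
    refine (convex_convexHull ℝ _).sum_mem (fun i _ => hw0 i) ?_
      fun i hi => subset_convexHull ℝ _ ⟨i, hi, rfl⟩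
    rw [← hw1]
    exact sum_subset (subset_univ I) fun i _ hi => hwI i hi

lemma mem_smul_simplexFace_iff {n : ℕ} {I : Finset (Fin n)} {c : ℝ} (hc : 0 < c)
    {w : Fin n → ℝ} :
    w ∈ c • simplexFace I ↔ (∀ i, 0 ≤ w i) ∧ (∀ i ∉ I, w i = 0) ∧ ∑ i, w i = c := by
  rw [Set.mem_smul_set_iff_inv_smul_mem₀ hc.ne', simplexFace_eq]
  simp [← mul_sum, hc, hc.ne', mul_nonneg_iff_of_pos_left, inv_mul_eq_one₀, eq_comm]

theorem lattice_point_decomposition_general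
    (n m : ℕ) (I : Fin m → Finset (Fin n)) (c : Fin m → ℕ)
    (hc : ∀ j, 0 < c j)
    (x : Fin n → ℝ)
    (hx : x ∈ ∑ j : Fin m, (c j : ℝ) • simplexFace (I j))
    (hxint : ∀ i, ∃ z : ℤ, x i = z) :
    ∃ p : Fin m → (Fin n → ℝ),
      (∀ j, p j ∈ (c j : ℝ) • simplexFace (I j)) ∧
      (∀ j i, ∃ z : ℤ, p j i = z) ∧
      x = ∑ j : Fin m, p j := by
  have hcR : ∀ j, (0 : ℝ) < c j := fun j => Nat.cast_pos.2 (hc j)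
  obtain ⟨y, hy, rfl⟩ := (Set.mem_fintype_sum _ x).1 hx
  simp only [mem_smul_simplexFace_iff (hcR _)] at hy
  choose hy0 hyI hyc using hy
  have hcol : ∀ i, ∃ k : ℕ, ∑ j, y j i = k := fun i => by
    obtain ⟨k, hk⟩ := hxint i
    have hx0 : 0 ≤ (∑ j, y j) i := by
      rw [Finset.sum_apply]
      exact sum_nonneg fun j _ => hy0 j i
    lift k to ℕ using Int.cast_nonneg_iff.1 (hk ▸ hx0)
    exact ⟨k, by simpa [Finset.sum_apply] using hk⟩
  choose k hk using hcol
  obtain ⟨q, hqrow, hqcol, hqy⟩ := exists_nat_matrix_of_margins hy0 hyc hk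
  refine ⟨fun j i => q j i, fun j => (mem_smul_simplexFace_iff (hcR j)).2 ⟨?_, ?_, ?_⟩,
    fun j i => ⟨q j i, rfl⟩, ?_⟩
  · exact fun i => Nat.cast_nonneg _
  · exact fun i hi => by simp [hqy j i (hyI j i hi)]
  · simp only [← Nat.cast_sum, hqrow]
  · ext i
    simp only [Finset.sum_apply, hk, ← Nat.cast_sum, hqcol]

/-- every integer lattice point of the Minkowski sum
`c 1 • Δ_{I 1} + ... + c m • Δ_{I m}` (with `c j` positive integers and `I j`
nonempty) is a sum `∑ j, p j` where each `p j` is an integer lattice point of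
`c j • Δ_{I j}`. -/
theorem lattice_point_decomposition
    (n m : ℕ) (I : Fin m → Finset (Fin n)) (c : Fin m → ℕ)
    (hI : ∀ j, (I j).Nonempty) (hc : ∀ j, 0 < c j)
    (x : Fin n → ℝ)
    (hx : x ∈ ∑ j : Fin m, (c j : ℝ) • simplexFace (I j))
    (hxint : ∀ i, ∃ z : ℤ, x i = z) :
    ∃ p : Fin m → (Fin n → ℝ),
      (∀ j, p j ∈ (c j : ℝ) • simplexFace (I j)) ∧
      (∀ j i, ∃ z : ℤ, p j i = z) ∧
      x = ∑ j : Fin m, p j :=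
  lattice_point_decomposition_general n m I c hc x hx hxint
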